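/- arXiv:1906.07658 — 3 statements merged into one kernel-verified Lean document; each statement's English description precedes it below -/
import Mathlib

section
/- If ψ is a continuously differentiable, symmetric, strictly log-concave probability density with full support on ℝ, then its cumulative distribution function Ψ is strictly log-concave, i.e., log Ψ is strictly concave on ℝ. -/
/-!
`log Ψ` is strictly concave iff `Ψ' / Ψ = ψ / Ψ` is strictly decreasing, i.e. iff `ψ' Ψ < ψ²`.
Fix `s` and put `c = ψ'(s) / ψ(s)`. As `ψ' / ψ` is strictly decreasing, `ψ - c Ψ` has positive
derivative on `(-∞, s)`; it is bounded below by `-c Ψ`, which tends to `0` at `-∞`, so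
`ψ(s) - c Ψ(s) > 0`.
-/

open MeasureTheory Filter Set Topology

section LogConcave

variable {g g' : ℝ → ℝ}

theorem strictConcaveOn_log_iff_strictAnti_div (hg : ∀ x, HasDerivAt g (g' x) x)
    (hpos : ∀ x, 0 < g x) :
    StrictConcaveOn ℝ univ (fun x => Real.log (g x)) ↔ StrictAnti fun x => g' x / g x := by
  have hlog : ∀ x, HasDerivAt (fun x => Real.log (g x)) (g' x / g x) x :=
    fun x => (hg x).log (hpos x).ne'
  have hderiv : deriv (fun x => Real.log (g x)) = fun x => g' x / g x :=
    funext fun x => (hlog x).deriv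
  constructor
  · intro h
    rw [← hderiv, ← strictAntiOn_univ]
    exact h.strictAntiOn_deriv fun x _ => (hlog x).differentiableAt
  · intro h
    exact StrictAnti.strictConcaveOn_univ_of_deriv
      (continuous_iff_continuousAt.2 fun x => (hlog x).continuousAt) (hderiv ▸ h)

end LogConcave

section Antiderivative

variable {f f' F : ℝ → ℝ}

theorem mul_antideriv_lt_sq_of_strictAnti_div (hf : ∀ x, HasDerivAt f (f' x) x)
    (hF : ∀ x, HasDerivAt F (f x) x) (hpos : ∀ x, 0 < f x) (hF0 : Tendsto F atBot (𝓝 0))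
    (hanti : StrictAnti fun x => f' x / f x) (s : ℝ) : f' s * F s < f s ^ 2 := by
  set c := f' s / f s
  set h := fun u => f u - c * F u with h_def
  have hh : ∀ u, HasDerivAt h (f' u - c * f u) u := fun u => (hf u).sub ((hF u).const_mul c)
  have hmono : StrictMonoOn h (Iic s) := by
    refine strictMonoOn_of_deriv_pos (convex_Iic s)
      (fun u _ => (hh u).continuousAt.continuousWithinAt) fun u hu => ?_
    rw [interior_Iic] at hu
    have hcu : c * f u < f' u := (lt_div_iff₀ (hpos u)).1 (hanti hu)
    rw [(hh u).deriv]
    linarith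
  have h_nonneg : 0 ≤ h (s - 1) := by
    have hlim : Tendsto (fun u => -c * F u) atBot (𝓝 0) := by simpa using hF0.const_mul (-c)
    refine le_of_tendsto hlim ?_
    filter_upwards [eventually_le_atBot (s - 1)] with u hu
    have hle : h u ≤ h (s - 1) :=
      hmono.monotoneOn (mem_Iic.2 (by linarith)) (mem_Iic.2 (by linarith)) hu
    have hfu := hpos u
    simp only [h_def] at hle ⊢
    linarith
  have hlt : h (s - 1) < h s := hmono (mem_Iic.2 (by linarith)) (mem_Iic.2 le_rfl) (by linarith)
  have hcf : c * f s = f' s := div_mul_cancel₀ _ (hpos s).ne'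
  have hgap : 0 < f s - c * F s := by simp only [h_def] at hlt h_nonneg; linarith
  rw [← hcf]
  nlinarith [mul_pos (hpos s) hgap]

theorem strictAnti_div_antideriv (hf : ∀ x, HasDerivAt f (f' x) x)
    (hF : ∀ x, HasDerivAt F (f x) x) (hpos : ∀ x, 0 < f x) (hFpos : ∀ x, 0 < F x)
    (hF0 : Tendsto F atBot (𝓝 0)) (hanti : StrictAnti fun x => f' x / f x) :
    StrictAnti fun x => f x / F x := by
  refine strictAnti_of_deriv_neg fun x => ?_
  have hd : HasDerivAt (fun x => f x / F x) ((f' x * F x - f x * f x) / F x ^ 2) x :=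
    (hf x).div (hF x) (hFpos x).ne'
  rw [hd.deriv]
  refine div_neg_of_neg_of_pos ?_ (pow_pos (hFpos x) 2)
  nlinarith [mul_antideriv_lt_sq_of_strictAnti_div hf hF hpos hF0 hanti x]

end Antiderivative

section IntegralIic

variable {f : ℝ → ℝ}

theorem hasDerivAt_integral_Iic (hf : Continuous f) (hfi : Integrable f) (s : ℝ) :
    HasDerivAt (fun s => ∫ t in Iic s, f t) (f s) s := by
  have hFTC : HasDerivAt (fun u => ∫ t in (0 : ℝ)..u, f t) (f s) s :=
    intervalIntegral.integral_hasDerivAt_right hfi.intervalIntegrable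
      hf.aestronglyMeasurable.stronglyMeasurableAtFilter hf.continuousAt
  refine (hFTC.const_add (∫ t in Iic 0, f t)).congr_of_eventuallyEq (Eventually.of_forall ?_)
  intro u
  dsimp only
  rw [← intervalIntegral.integral_Iic_sub_Iic hfi.integrableOn hfi.integrableOn]
  ring

theorem integral_Iic_pos (hfi : Integrable f) (hpos : ∀ t, 0 < f t) (s : ℝ) :
    0 < ∫ t in Iic s, f t := by
  rw [setIntegral_pos_iff_support_of_nonneg_ae
    (Eventually.of_forall fun t => (hpos t).le) hfi.integrableOn]
  have hsupp : Function.support f = univ := eq_univ_of_forall fun t => (hpos t).ne'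
  simp [hsupp]

end IntegralIic

theorem cdf_strict_log_concave_general (ψ : ℝ → ℝ)
    (hC1 : ContDiff ℝ 1 ψ)
    (hpos : ∀ t, 0 < ψ t)
    (hlogconc : StrictConcaveOn ℝ Set.univ (fun t => Real.log (ψ t)))
    (hint : ∫ t, ψ t = 1) :
    StrictConcaveOn ℝ Set.univ (fun s => Real.log (∫ t in Set.Iic s, ψ t)) := by
  have hi : Integrable ψ := .of_integral_ne_zero (hint ▸ one_ne_zero)
  have hψ : ∀ t, HasDerivAt ψ (deriv ψ t) t :=
    fun t => (hC1.differentiable one_ne_zero t).hasDerivAt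
  have hΨ := hasDerivAt_integral_Iic hC1.continuous hi
  have hΨpos := integral_Iic_pos hi hpos
  rw [strictConcaveOn_log_iff_strictAnti_div hΨ hΨpos]
  exact strictAnti_div_antideriv hψ hΨ hpos hΨpos (tendsto_integral_Iic_zero tendsto_id)
    ((strictConcaveOn_log_iff_strictAnti_div hψ hpos).1 hlogconc)

/-- If ψ is a continuously differentiable, symmetric, strictly log-concave probability
density with full support on ℝ, then its CDF Ψ is strictly log-concave. -/
theorem cdf_strict_log_concave (ψ : ℝ → ℝ)
    (hC1 : ContDiff ℝ 1 ψ)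
    (hsymm : ∀ t, ψ (-t) = ψ t)
    (hpos : ∀ t, 0 < ψ t)
    (hlogconc : StrictConcaveOn ℝ Set.univ (fun t => Real.log (ψ t)))
    (hint : ∫ t, ψ t = 1) :
    StrictConcaveOn ℝ Set.univ (fun s => Real.log (∫ t in Set.Iic s, ψ t)) :=
  cdf_strict_log_concave_general ψ hC1 hpos hlogconc hint
end

section
/- Let ψ be a log-concave probability density on ℝ with CDF Ψ, and fix m ∈ {1,…,M}. Then the function v ↦ ∫_ℝ ψ(t) ∏_{ℓ ≠ m} Ψ(t + v_m - v_ℓ) dt is log-concave on ℝ^M. -/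
/-! The integrand `(v, t) ↦ ψ(t) ∏_{ℓ ≠ m} Ψ(t + v_m - v_ℓ)` is jointly log-concave, since `Ψ` is
(being itself the marginal of the log-concave function `(x, s) ↦ ψ(s) 1_{s ≤ x}`) and log-concavity
survives affine substitution and products. Prékopa's theorem — that integrating out one real
variable preserves log-concavity — is the one-dimensional Prékopa–Leindler inequality applied to
the sections at `v`, `w` and `a • v + b • w`. That inequality follows from the one-dimensional
Brunn–Minkowski inequality `|A| + |B| ≤ |A + B|` applied to superlevel sets, after the layer-cake
formula and weighted AM–GM. -/

open MeasureTheory Set Filter Topology Pointwise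

namespace Real

theorem volume_add_volume_le_volume_add_of_isCompact {K L : Set ℝ} (hK : IsCompact K)
    (hL : IsCompact L) (hK₀ : K.Nonempty) (hL₀ : L.Nonempty) :
    volume K + volume L ≤ volume (K + L) := by
  set k := sSup K
  set l := sInf L
  have hk : k ∈ K := hK.sSup_mem hK₀
  have hl : l ∈ L := hL.sInf_mem hL₀
  have hunion : (l +ᵥ K) ∪ (k +ᵥ L) ⊆ K + L := by
    rintro _ (⟨x, hx, rfl⟩ | ⟨y, hy, rfl⟩)
    exacts [⟨x, hx, l, hl, add_comm _ _⟩, ⟨k, hk, y, hy, rfl⟩]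
  -- `l +ᵥ K` lies left of `l + k` and `k +ᵥ L` right of it
  have hinter : (l +ᵥ K) ∩ (k +ᵥ L) ⊆ {l + k} := by
    rintro _ ⟨⟨x, hx, rfl⟩, ⟨y, hy, hxy⟩⟩
    have hxk : x ≤ k := le_csSup hK.bddAbove hx
    have hly : l ≤ y := csInf_le hL.bddBelow hy
    simp only [vadd_eq_add] at hxy ⊢
    rw [mem_singleton_iff]
    linarith
  calc volume K + volume L = volume (l +ᵥ K) + volume (k +ᵥ L) := by
        rw [measure_vadd, measure_vadd]
    _ = volume ((l +ᵥ K) ∪ (k +ᵥ L)) + volume ((l +ᵥ K) ∩ (k +ᵥ L)) :=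
        (measure_union_add_inter _ (hL.measurableSet.const_vadd k)).symm
    _ ≤ volume (K + L) + volume ({l + k} : Set ℝ) :=
        add_le_add (measure_mono hunion) (measure_mono hinter)
    _ = volume (K + L) := by rw [Real.volume_singleton, add_zero]

theorem volume_add_volume_le_volume_add {A B : Set ℝ} (hA : MeasurableSet A)
    (hB : MeasurableSet B) (hA₀ : A.Nonempty) (hB₀ : B.Nonempty) :
    volume A + volume B ≤ volume (A + B) := by
  obtain ⟨a₀, ha₀⟩ := hA₀
  obtain ⟨b₀, hb₀⟩ := hB₀
  have hA_le : volume A ≤ volume (A + B) := by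
    rw [← measure_vadd volume b₀ A]
    exact measure_mono (by rintro _ ⟨x, hx, rfl⟩; exact ⟨x, hx, b₀, hb₀, add_comm _ _⟩)
  have hB_le : volume B ≤ volume (A + B) := by
    rw [← measure_vadd volume a₀ B]
    exact measure_mono (by rintro _ ⟨y, hy, rfl⟩; exact ⟨a₀, ha₀, y, hy, rfl⟩)
  refine le_of_forall_lt fun r hr => ?_
  rcases eq_or_ne (volume A) 0 with hA0 | hA0
  · rw [hA0, zero_add] at hr
    exact hr.trans_le hB_le
  rcases eq_or_ne (volume B) 0 with hB0 | hB0
  · rw [hB0, add_zero] at hr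
    exact hr.trans_le hA_le
  obtain ⟨r₁, hr₁, r₂, hr₂, hr⟩ := ENNReal.exists_lt_add_of_lt_add hr hA0 hB0
  obtain ⟨K, hKA, hK, hrK⟩ := hA.exists_lt_isCompact hr₁
  obtain ⟨L, hLB, hL, hrL⟩ := hB.exists_lt_isCompact hr₂
  calc r < r₁ + r₂ := hr
    _ ≤ volume K + volume L := add_le_add hrK.le hrL.le
    _ ≤ volume (K + L) := volume_add_volume_le_volume_add_of_isCompact hK hL
        (nonempty_of_measure_ne_zero (pos_of_gt hrK).ne')
        (nonempty_of_measure_ne_zero (pos_of_gt hrL).ne')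
    _ ≤ volume (A + B) := measure_mono (add_subset_add hKA hLB)

end Real

theorem MeasureTheory.Integrable.min_natCast {α : Type*} [MeasurableSpace α] {μ : Measure α}
    {u : α → ℝ} (hu : Integrable u μ) (n : ℕ) : Integrable (fun x => min (u x) n) μ := by
  refine hu.mono (hu.aestronglyMeasurable.inf aestronglyMeasurable_const)
    (ae_of_all _ fun x => ?_)
  rw [Real.norm_eq_abs, Real.norm_eq_abs, abs_le]
  exact ⟨le_min (neg_abs_le _) ((neg_nonpos.mpr (abs_nonneg _)).trans n.cast_nonneg),
    (min_le_left _ _).trans (le_abs_self _)⟩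

theorem tendsto_integral_min_natCast {α : Type*} [MeasurableSpace α] {μ : Measure α}
    {u : α → ℝ} (hu : Integrable u μ) :
    Tendsto (fun n : ℕ => ∫ x, min (u x) n ∂μ) atTop (𝓝 (∫ x, u x ∂μ)) := by
  refine integral_tendsto_of_tendsto_of_monotone hu.min_natCast hu
    (ae_of_all _ fun x m n hmn => min_le_min le_rfl (Nat.cast_le.mpr hmn))
    (ae_of_all _ fun x => ?_)
  obtain ⟨n, hn⟩ := exists_nat_ge (u x)
  exact tendsto_atTop_of_eventually_const fun k hk =>
    min_eq_left (hn.trans (Nat.cast_le.mpr hk))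

section PrekopaLeindler

variable {f g h : ℝ → ℝ} {a b : ℝ}

theorem smul_superlevel_add_smul_superlevel_subset {α β : ℝ} (ha : 0 < a) (hb : 0 < b)
    (hα : 0 ≤ α) (hβ : 0 ≤ β) (hfgh : ∀ x y, f x ^ a * g y ^ b ≤ h (a * x + b * y)) :
    a • {x | α < f x} + b • {y | β < g y} ⊆ {z | α ^ a * β ^ b < h z} := by
  rintro _ ⟨_, ⟨x, hx, rfl⟩, _, ⟨y, hy, rfl⟩, rfl⟩
  calc α ^ a * β ^ b < f x ^ a * g y ^ b :=
        mul_lt_mul'' (Real.rpow_lt_rpow hα hx ha) (Real.rpow_lt_rpow hβ hy hb)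
          (Real.rpow_nonneg hα _) (Real.rpow_nonneg hβ _)
    _ ≤ h (a * x + b * y) := hfgh x y

theorem ofReal_mul_volume_add_ofReal_mul_volume_le_volume_superlevel {α β : ℝ}
    (hfm : Measurable f) (hgm : Measurable g) (ha : 0 < a) (hb : 0 < b) (hα : 0 ≤ α)
    (hβ : 0 ≤ β) (hA : {x | α < f x}.Nonempty) (hB : {y | β < g y}.Nonempty)
    (hfgh : ∀ x y, f x ^ a * g y ^ b ≤ h (a * x + b * y)) :
    ENNReal.ofReal a * volume {x | α < f x} + ENNReal.ofReal b * volume {y | β < g y} ≤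
      volume {z | α ^ a * β ^ b < h z} := by
  calc _ = volume (a • {x | α < f x}) + volume (b • {y | β < g y}) := by
        simp only [Measure.addHaar_smul_of_nonneg _ ha.le, Measure.addHaar_smul_of_nonneg _ hb.le,
          Module.finrank_self, pow_one]
    _ ≤ volume (a • {x | α < f x} + b • {y | β < g y}) :=
        Real.volume_add_volume_le_volume_add
          ((measurableSet_lt measurable_const hfm).const_smul₀ a)
          ((measurableSet_lt measurable_const hgm).const_smul₀ b) hA.smul_set hB.smul_set
    _ ≤ _ := measure_mono (smul_superlevel_add_smul_superlevel_subset ha hb hα hβ hfgh)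

theorem lintegral_Ioi_volume_mul_lt (hfm : Measurable f) (hf0 : ∀ x, 0 ≤ f x)
    (hfi : Integrable f) {c : ℝ} (hc : 0 < c) :
    ∫⁻ t in Ioi 0, volume {x | c * t < f x} = ENNReal.ofReal ((∫ x, f x) / c) := by
  have hset : ∀ t, {x | c * t < f x} = {x | t < f x / c} := fun t => by
    ext x
    simp only [mem_ofPred_eq, lt_div_iff₀ hc, mul_comm]
  have hfc0 : ∀ x, 0 ≤ f x / c := fun x => div_nonneg (hf0 x) hc.le
  simp_rw [hset, ← integral_div]
  rw [ofReal_integral_eq_lintegral_ofReal (hfi.div_const c) (ae_of_all _ hfc0),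
    lintegral_eq_lintegral_meas_lt _ (ae_of_all _ hfc0) (hfm.div_const c).aemeasurable]

theorem ofReal_mul_volume_add_ofReal_mul_volume_le_volume_mul_lt {cf cg t : ℝ}
    (hfm : Measurable f) (hgm : Measurable g) (ha : 0 < a) (hb : 0 < b) (hab : a + b = 1)
    (hf : IsLUB (range f) cf) (hg : IsLUB (range g) cg) (hcf : 0 < cf) (hcg : 0 < cg)
    (ht : 0 < t) (hfgh : ∀ x y, f x ^ a * g y ^ b ≤ h (a * x + b * y)) :
    ENNReal.ofReal a * volume {x | cf * t < f x} + ENNReal.ofReal b * volume {y | cg * t < g y} ≤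
      volume {z | cf ^ a * cg ^ b * t < h z} := by
  rcases lt_or_ge t 1 with ht1 | ht1
  · have hct : (cf * t) ^ a * (cg * t) ^ b = cf ^ a * cg ^ b * t := by
      rw [Real.mul_rpow hcf.le ht.le, Real.mul_rpow hcg.le ht.le, mul_mul_mul_comm,
        ← Real.rpow_add ht, hab, Real.rpow_one]
    obtain ⟨_, ⟨x, rfl⟩, hx, -⟩ := hf.exists_between (mul_lt_of_lt_one_right hcf ht1)
    obtain ⟨_, ⟨y, rfl⟩, hy, -⟩ := hg.exists_between (mul_lt_of_lt_one_right hcg ht1)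
    rw [← hct]
    exact ofReal_mul_volume_add_ofReal_mul_volume_le_volume_superlevel hfm hgm ha hb
      (mul_nonneg hcf.le ht.le) (mul_nonneg hcg.le ht.le) ⟨x, hx⟩ ⟨y, hy⟩ hfgh
  · have hempty : ∀ {u : ℝ → ℝ} {cu : ℝ}, IsLUB (range u) cu → 0 ≤ cu →
        {x | cu * t < u x} = ∅ := fun hu hcu => eq_empty_of_forall_notMem fun x hx =>
      (hx.trans_le (hu.1 (mem_range_self x))).not_ge (le_mul_of_one_le_right hcu ht1)
    simp [hempty hf hcf.le, hempty hg hcg.le]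

/-- With `cf = sup f`, `cg = sup g` and `c = cf ^ a * cg ^ b`, the layer-cake formula turns the
comparison of superlevel sets into `a ∫f / cf + b ∫g / cg ≤ ∫h / c`, and weighted AM–GM
finishes. -/
theorem integral_rpow_mul_integral_rpow_le_of_bddAbove (hfm : Measurable f)
    (hgm : Measurable g) (hhm : Measurable h) (hf0 : ∀ x, 0 ≤ f x) (hg0 : ∀ x, 0 ≤ g x)
    (hh0 : ∀ x, 0 ≤ h x) (hfi : Integrable f) (hgi : Integrable g) (hhi : Integrable h)
    (hfb : BddAbove (range f)) (hgb : BddAbove (range g)) (ha : 0 < a) (hb : 0 < b)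
    (hab : a + b = 1) (hfgh : ∀ x y, f x ^ a * g y ^ b ≤ h (a * x + b * y)) :
    (∫ x, f x) ^ a * (∫ x, g x) ^ b ≤ ∫ x, h x := by
  set cf := sSup (range f)
  set cg := sSup (range g)
  have hfcf : ∀ x, f x ≤ cf := fun x => le_csSup hfb (mem_range_self x)
  have hgcg : ∀ x, g x ≤ cg := fun x => le_csSup hgb (mem_range_self x)
  have hP : 0 ≤ ∫ x, f x := integral_nonneg hf0
  have hQ : 0 ≤ ∫ x, g x := integral_nonneg hg0
  have hH : 0 ≤ ∫ x, h x := integral_nonneg hh0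
  rcases ((hf0 0).trans (hfcf 0)).eq_or_lt with hcf | hcf
  · have : f = 0 := funext fun x => le_antisymm ((hfcf x).trans hcf.ge) (hf0 x)
    simpa [this, Real.zero_rpow ha.ne'] using hH
  rcases ((hg0 0).trans (hgcg 0)).eq_or_lt with hcg | hcg
  · have : g = 0 := funext fun x => le_antisymm ((hgcg x).trans hcg.ge) (hg0 x)
    simpa [this, Real.zero_rpow hb.ne'] using hH
  set c := cf ^ a * cg ^ b with hc_def
  have hc : 0 < c := by positivity
  have hlevel : ∀ t ∈ Ioi (0 : ℝ), ENNReal.ofReal a * volume {x | cf * t < f x} +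
      ENNReal.ofReal b * volume {y | cg * t < g y} ≤ volume {z | c * t < h z} := fun t ht =>
    ofReal_mul_volume_add_ofReal_mul_volume_le_volume_mul_lt hfm hgm ha hb hab
      (isLUB_csSup (range_nonempty f) hfb) (isLUB_csSup (range_nonempty g) hgb) hcf hcg ht hfgh
  have hlayer : ENNReal.ofReal (a * ((∫ x, f x) / cf) + b * ((∫ x, g x) / cg)) ≤
      ENNReal.ofReal ((∫ x, h x) / c) := by
    rw [← lintegral_Ioi_volume_mul_lt hhm hh0 hhi hc,
      ENNReal.ofReal_add (by positivity) (by positivity), ENNReal.ofReal_mul ha.le,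
      ENNReal.ofReal_mul hb.le, ← lintegral_Ioi_volume_mul_lt hfm hf0 hfi hcf,
      ← lintegral_Ioi_volume_mul_lt hgm hg0 hgi hcg]
    exact (add_le_add (lintegral_const_mul_le _ _) (lintegral_const_mul_le _ _)).trans
      ((le_lintegral_add _ _).trans (setLIntegral_mono' measurableSet_Ioi hlevel))
  rw [ENNReal.ofReal_le_ofReal_iff (by positivity)] at hlayer
  calc (∫ x, f x) ^ a * (∫ x, g x) ^ b
      = c * (((∫ x, f x) / cf) ^ a * ((∫ x, g x) / cg) ^ b) := by
        rw [Real.div_rpow hP hcf.le, Real.div_rpow hQ hcg.le, hc_def]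
        field_simp
    _ ≤ c * (a * ((∫ x, f x) / cf) + b * ((∫ x, g x) / cg)) := by
        gcongr
        exact Real.geom_mean_le_arith_mean2_weighted ha.le hb.le (by positivity)
          (by positivity) hab
    _ ≤ c * ((∫ x, h x) / c) := by gcongr
    _ = ∫ x, h x := mul_div_cancel₀ _ hc.ne'

theorem integral_rpow_mul_integral_rpow_le_of_pos (hfm : Measurable f) (hgm : Measurable g)
    (hhm : Measurable h) (hf0 : ∀ x, 0 ≤ f x) (hg0 : ∀ x, 0 ≤ g x) (hh0 : ∀ x, 0 ≤ h x)
    (hfi : Integrable f) (hgi : Integrable g) (hhi : Integrable h) (ha : 0 < a) (hb : 0 < b)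
    (hab : a + b = 1) (hfgh : ∀ x y, f x ^ a * g y ^ b ≤ h (a * x + b * y)) :
    (∫ x, f x) ^ a * (∫ x, g x) ^ b ≤ ∫ x, h x := by
  have hlim := ((tendsto_integral_min_natCast hfi).rpow_const (Or.inr ha.le)).mul
    ((tendsto_integral_min_natCast hgi).rpow_const (Or.inr hb.le))
  refine le_of_tendsto' hlim fun n => ?_
  have hf0n : ∀ x, 0 ≤ min (f x) n := fun x => le_min (hf0 x) n.cast_nonneg
  have hg0n : ∀ x, 0 ≤ min (g x) n := fun x => le_min (hg0 x) n.cast_nonneg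
  refine integral_rpow_mul_integral_rpow_le_of_bddAbove (hfm.min measurable_const)
    (hgm.min measurable_const) hhm hf0n hg0n hh0 (hfi.min_natCast n) (hgi.min_natCast n) hhi
    ⟨n, forall_mem_range.2 fun x => min_le_right _ _⟩
    ⟨n, forall_mem_range.2 fun x => min_le_right _ _⟩ ha hb hab fun x y => ?_
  exact (mul_le_mul (Real.rpow_le_rpow (hf0n x) (min_le_left _ _) ha.le)
    (Real.rpow_le_rpow (hg0n y) (min_le_left _ _) hb.le) (Real.rpow_nonneg (hg0n y) _)
    (Real.rpow_nonneg (hf0 x) _)).trans (hfgh x y)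

theorem integral_rpow_mul_integral_rpow_le (hfm : Measurable f) (hgm : Measurable g)
    (hhm : Measurable h) (hf0 : ∀ x, 0 ≤ f x) (hg0 : ∀ x, 0 ≤ g x) (hh0 : ∀ x, 0 ≤ h x)
    (hfi : Integrable f) (hgi : Integrable g) (hhi : Integrable h) (ha : 0 ≤ a) (hb : 0 ≤ b)
    (hab : a + b = 1) (hfgh : ∀ x y, f x ^ a * g y ^ b ≤ h (a * x + b * y)) :
    (∫ x, f x) ^ a * (∫ x, g x) ^ b ≤ ∫ x, h x := by
  rcases ha.eq_or_lt with rfl | ha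
  · obtain rfl : b = 1 := by linarith
    simpa using integral_mono hgi hhi fun y => by simpa using hfgh y y
  rcases hb.eq_or_lt with rfl | hb
  · obtain rfl : a = 1 := by linarith
    simpa using integral_mono hfi hhi fun x => by simpa using hfgh x x
  exact integral_rpow_mul_integral_rpow_le_of_pos hfm hgm hhm hf0 hg0 hh0 hfi hgi hhi ha hb hab
    hfgh

end PrekopaLeindler

/-- Stated multiplicatively, so that `f` may vanish (`log f = -∞`). -/
structure LogConcave {E : Type*} [AddCommMonoid E] [Module ℝ E] (f : E → ℝ) : Prop where
  nonneg : ∀ x, 0 ≤ f x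
  rpow_mul_rpow_le : ∀ (x y : E) (a b : ℝ), 0 ≤ a → 0 ≤ b → a + b = 1 →
    f x ^ a * f y ^ b ≤ f (a • x + b • y)

namespace LogConcave

variable {E F : Type*} [AddCommGroup E] [Module ℝ E] [AddCommGroup F] [Module ℝ F]
  {f g : E → ℝ}

theorem one : LogConcave (1 : E → ℝ) :=
  ⟨fun _ => zero_le_one, fun _ _ _ _ _ _ _ => by simp⟩

theorem mul (hf : LogConcave f) (hg : LogConcave g) : LogConcave fun x => f x * g x := by
  refine ⟨fun x => mul_nonneg (hf.nonneg x) (hg.nonneg x), fun x y a b ha hb hab => ?_⟩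
  calc (f x * g x) ^ a * (f y * g y) ^ b = (f x ^ a * f y ^ b) * (g x ^ a * g y ^ b) := by
        rw [Real.mul_rpow (hf.nonneg x) (hg.nonneg x), Real.mul_rpow (hf.nonneg y) (hg.nonneg y)]
        ring
    _ ≤ f (a • x + b • y) * g (a • x + b • y) :=
        mul_le_mul (hf.rpow_mul_rpow_le x y a b ha hb hab) (hg.rpow_mul_rpow_le x y a b ha hb hab)
          (by have := hg.nonneg x; have := hg.nonneg y; positivity) (hf.nonneg _)

theorem prod {ι : Type*} {s : Finset ι} {f : ι → E → ℝ} (hf : ∀ i ∈ s, LogConcave (f i)) :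
    LogConcave fun x => ∏ i ∈ s, f i x := by
  rw [← Finset.prod_fn]
  exact Finset.prod_induction _ _ (fun _ _ => mul) one hf

theorem comp_affineMap {f : F → ℝ} (hf : LogConcave f) (g : E →ᵃ[ℝ] F) : LogConcave (f ∘ g) :=
  ⟨fun x => hf.nonneg (g x), fun x y a b ha hb hab => by
    simpa only [Function.comp_apply, Convex.combo_affine_apply hab] using
      hf.rpow_mul_rpow_le (g x) (g y) a b ha hb hab⟩

theorem indicator {s : Set E} (hf : LogConcave f) (hs : Convex ℝ s) :
    LogConcave (s.indicator f) := by
  have hnonneg : ∀ x, 0 ≤ s.indicator f x := indicator_nonneg fun x _ => hf.nonneg x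
  refine ⟨hnonneg, fun x y a b ha hb hab => ?_⟩
  rcases ha.eq_or_lt with rfl | ha
  · obtain rfl : b = 1 := by linarith
    simp
  rcases hb.eq_or_lt with rfl | hb
  · obtain rfl : a = 1 := by linarith
    simp
  by_cases hxy : x ∈ s ∧ y ∈ s
  · rw [indicator_of_mem hxy.1, indicator_of_mem hxy.2,
      indicator_of_mem (hs hxy.1 hxy.2 ha.le hb.le hab)]
    exact hf.rpow_mul_rpow_le x y a b ha.le hb.le hab
  · rcases not_and_or.mp hxy with hx | hy
    · rw [indicator_of_notMem hx, Real.zero_rpow ha.ne', zero_mul]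
      exact hnonneg _
    · rw [indicator_of_notMem hy, Real.zero_rpow hb.ne', mul_zero]
      exact hnonneg _

theorem integral_prodMk {G : E × ℝ → ℝ} (hG : LogConcave G)
    (hm : ∀ v, Measurable fun t => G (v, t)) (hi : ∀ v, Integrable fun t => G (v, t)) :
    LogConcave fun v => ∫ t, G (v, t) :=
  ⟨fun _ => integral_nonneg fun _ => hG.nonneg _, fun v w a b ha hb hab =>
    integral_rpow_mul_integral_rpow_le (hm v) (hm w) (hm _) (fun _ => hG.nonneg _)
      (fun _ => hG.nonneg _) (fun _ => hG.nonneg _) (hi v) (hi w) (hi _) ha hb hab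
      fun x y => hG.rpow_mul_rpow_le (v, x) (w, y) a b ha hb hab⟩

theorem integral_Iic {ψ : ℝ → ℝ} (hψ : LogConcave ψ) (hm : Measurable ψ) (hi : Integrable ψ) :
    LogConcave fun x => ∫ s in Iic x, ψ s := by
  have hconv : Convex ℝ {p : ℝ × ℝ | p.2 ≤ p.1} := fun p hp q hq a b ha hb _ => by
    change a * p.2 + b * q.2 ≤ a * p.1 + b * q.1
    gcongr
    exacts [hp, hq]
  have hG := (hψ.comp_affineMap (LinearMap.snd ℝ ℝ ℝ).toAffineMap).indicator hconv
  have hsection : ∀ x, (fun s => {p : ℝ × ℝ | p.2 ≤ p.1}.indicator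
      (ψ ∘ (LinearMap.snd ℝ ℝ ℝ).toAffineMap) (x, s)) = (Iic x).indicator ψ := fun x => rfl
  have := hG.integral_prodMk (fun x => by rw [hsection]; exact hm.indicator measurableSet_Iic)
    (fun x => by rw [hsection]; exact hi.indicator measurableSet_Iic)
  simpa only [hsection, integral_indicator measurableSet_Iic] using this

end LogConcave

/-- The one-hot likelihood factor is log-concave: for a log-concave probability density ψ
with CDF Ψ and any m, the map v ↦ ∫ ψ(t) ∏_{ℓ ≠ m} Ψ(t + v_m - v_ℓ) dt is log-concave
on ℝ^M. -/
theorem one_hot_likelihood_log_concave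
    {M : ℕ} (m : Fin M)
    (ψ : ℝ → ℝ) (hmeas : Measurable ψ) (hnn : ∀ t, 0 ≤ ψ t)
    (hint : ∫ t, ψ t = 1)
    (hlogconc : ∀ x y a b : ℝ, 0 ≤ a → 0 ≤ b → a + b = 1 →
      ψ x ^ a * ψ y ^ b ≤ ψ (a * x + b * y)) :
    ∀ (v w : Fin M → ℝ) (a b : ℝ), 0 ≤ a → 0 ≤ b → a + b = 1 →
      (∫ t, ψ t * ∏ ℓ ∈ Finset.univ.erase m,
          (∫ s in Set.Iic (t + v m - v ℓ), ψ s)) ^ a *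
      (∫ t, ψ t * ∏ ℓ ∈ Finset.univ.erase m,
          (∫ s in Set.Iic (t + w m - w ℓ), ψ s)) ^ b ≤
      (∫ t, ψ t * ∏ ℓ ∈ Finset.univ.erase m,
          (∫ s in Set.Iic (t + (a • v + b • w) m - (a • v + b • w) ℓ), ψ s)) := by
  have hi : Integrable ψ := .of_integral_ne_zero (by simp [hint])
  have hψ : LogConcave ψ := ⟨hnn, hlogconc⟩
  set Ψ := fun x => ∫ s in Iic x, ψ s
  have hΨ : LogConcave Ψ := hψ.integral_Iic hmeas hi
  have hΨ_mono : Monotone Ψ := fun x y hxy =>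
    setIntegral_mono_set hi.integrableOn (ae_of_all _ hnn) (Iic_subset_Iic.2 hxy).eventuallyLE
  have hΨ_le_one : ∀ x, Ψ x ≤ 1 := fun x => hint ▸ setIntegral_le_integral hi (ae_of_all _ hnn)
  let π (ℓ : Fin M) : (Fin M → ℝ) × ℝ →ₗ[ℝ] ℝ :=
    LinearMap.proj (R := ℝ) (φ := fun _ => ℝ) ℓ ∘ₗ LinearMap.fst ℝ _ ℝ
  let L (ℓ : Fin M) : (Fin M → ℝ) × ℝ →ₗ[ℝ] ℝ := LinearMap.snd ℝ _ ℝ + π m - π ℓ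
  have hG : LogConcave fun p : (Fin M → ℝ) × ℝ =>
      ψ p.2 * ∏ ℓ ∈ Finset.univ.erase m, Ψ (p.2 + p.1 m - p.1 ℓ) :=
    (hψ.comp_affineMap (LinearMap.snd ℝ (Fin M → ℝ) ℝ).toAffineMap).mul
      (LogConcave.prod fun ℓ _ => hΨ.comp_affineMap (L ℓ).toAffineMap)
  have hprod_meas : ∀ v : Fin M → ℝ,
      Measurable fun t => ∏ ℓ ∈ Finset.univ.erase m, Ψ (t + v m - v ℓ) := fun v =>
    Finset.measurable_prod _ fun ℓ _ => hΨ_mono.measurable.comp (by fun_prop)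
  refine (hG.integral_prodMk (fun v => hmeas.mul (hprod_meas v)) fun v => ?_).rpow_mul_rpow_le
  refine hi.mul_bdd (hprod_meas v).aestronglyMeasurable (c := 1) (ae_of_all _ fun t => ?_)
  rw [Real.norm_of_nonneg (Finset.prod_nonneg fun ℓ _ => hΨ.nonneg _)]
  exact Finset.prod_le_one (fun ℓ _ => hΨ.nonneg _) fun ℓ _ => hΨ_le_one _
end

section
/- Let C ∈ ℝ^{N×N} be symmetric positive definite, Z' ⊆ {1,…,N} with |Z'| = J, and let C' ∈ ℝ^{J×J} be the principal submatrix of C with rows and columns indexed by Z'. Let Φ' : ℝ^J → ℝ be convex, bounded below, and differentiable. Then minimizing J(u) = (1/2)⟨u, C⁻¹u⟩ + Φ'(u|_{Z'}) over u ∈ ℝ^N is equivalent to minimizing J'(b) = (1/2)⟨b, (C')⁻¹b⟩ + Φ'(b) over b ∈ ℝ^J, in the sense that both have unique minimizers u* and b*, and b* = u*|_{Z'}. -/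
/-! The restriction `u ↦ u|_{Z'}` is a matrix `M` with `M C Mᵀ = C'`. Among all `u` with
`M u = b`, the least value of `⟨u, C⁻¹ u⟩` is `⟨b, C'⁻¹ b⟩`, attained at `v = C Mᵀ C'⁻¹ b`
(expand `⟨u - v, C⁻¹ (u - v)⟩ ≥ 0`). Hence `J(u) ≥ J'(u|_{Z'})`, with equality at this lift,
so the lift of the minimizer `b*` of `J'` minimizes `J`. Existence and uniqueness of the
minimizers come from coercivity and strict convexity of both functionals. -/

open Matrix Filter

noncomputable def regularizedObjective {ι : Type*} [Fintype ι] (A : Matrix ι ι ℝ)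
    (Φ : (ι → ℝ) → ℝ) (x : ι → ℝ) : ℝ :=
  1 / 2 * (x ⬝ᵥ A *ᵥ x) + Φ x

namespace Matrix

theorem continuous_dotProduct_mulVec {ι : Type*} [Fintype ι] (A : Matrix ι ι ℝ) :
    Continuous fun x : ι → ℝ => x ⬝ᵥ A *ᵥ x := by
  fun_prop

theorem one_submatrix_mulVec {m n R : Type*} [Fintype n] [DecidableEq n] [NonAssocSemiring R]
    (e : m → n) (u : n → R) : (1 : Matrix n n R).submatrix e id *ᵥ u = u ∘ e := by
  ext k
  simp [mulVec, dotProduct, one_apply]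

theorem one_submatrix_mul_mul_transpose {m n R : Type*} [Fintype n] [DecidableEq n]
    [NonAssocSemiring R] (e : m → n) (C : Matrix n n R) :
    (1 : Matrix n n R).submatrix e id * C * ((1 : Matrix n n R).submatrix e id)ᵀ =
      C.submatrix e e := by
  ext i j
  simp [mul_apply, one_apply]

end Matrix

namespace Matrix.PosDef

section Objective

variable {ι : Type*} [Fintype ι] {A : Matrix ι ι ℝ}

theorem exists_pos_mul_sq_norm_le_dotProduct_mulVec (hA : A.PosDef) :
    ∃ c > 0, ∀ x : ι → ℝ, c * ‖x‖ ^ 2 ≤ x ⬝ᵥ A *ᵥ x := by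
  rcases isEmpty_or_nonempty ι with hι | hι
  · exact ⟨1, one_pos, fun x => by simp [Subsingleton.elim x 0]⟩
  obtain ⟨x₀, hx₀, hmin⟩ := (isCompact_sphere (0 : ι → ℝ) 1).exists_isMinOn
    (NormedSpace.sphere_nonempty.2 zero_le_one) (continuous_dotProduct_mulVec A).continuousOn
  refine ⟨_, hA.dotProduct_mulVec_pos (ne_zero_of_mem_unit_sphere ⟨x₀, hx₀⟩), fun x => ?_⟩
  rcases eq_or_ne x 0 with rfl | hx
  · simp
  have hx' : 0 < ‖x‖ := norm_pos_iff.2 hx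
  have hscaled := hmin (a := ‖x‖⁻¹ • x) (by simp [norm_smul, hx'.ne'])
  simp only [Set.mem_ofPred_eq, mulVec_smul, dotProduct_smul, smul_dotProduct,
    smul_eq_mul] at hscaled
  calc x₀ ⬝ᵥ A *ᵥ x₀ * ‖x‖ ^ 2 ≤ ‖x‖⁻¹ * (‖x‖⁻¹ * (x ⬝ᵥ A *ᵥ x)) * ‖x‖ ^ 2 := by gcongr
    _ = x ⬝ᵥ A *ᵥ x := by field_simp

theorem strictConvexOn_dotProduct_mulVec (hA : A.PosDef) :
    StrictConvexOn ℝ Set.univ fun x : ι → ℝ => x ⬝ᵥ A *ᵥ x := by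
  refine ⟨convex_univ, fun x _ y _ hxy a b ha hb hab => ?_⟩
  have hgap : a * (x ⬝ᵥ A *ᵥ x) + b * (y ⬝ᵥ A *ᵥ y) - (a • x + b • y) ⬝ᵥ A *ᵥ (a • x + b • y)
      = a * b * ((x - y) ⬝ᵥ A *ᵥ (x - y)) := by
    obtain rfl : b = 1 - a := by linarith
    simp only [mulVec_add, mulVec_sub, mulVec_smul, dotProduct_add, add_dotProduct,
      dotProduct_sub, sub_dotProduct, dotProduct_smul, smul_dotProduct, smul_eq_mul]
    ring
  have hpos := hA.dotProduct_mulVec_pos (sub_ne_zero.2 hxy)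
  simp only [star_trivial] at hpos
  simp only [smul_eq_mul]
  nlinarith [mul_pos (mul_pos ha hb) hpos]

theorem strictConvexOn_regularizedObjective (hA : A.PosDef) {Φ : (ι → ℝ) → ℝ}
    (hΦ : ConvexOn ℝ Set.univ Φ) : StrictConvexOn ℝ Set.univ (regularizedObjective A Φ) := by
  have hhalf : StrictConvexOn ℝ Set.univ fun x : ι → ℝ => 1 / 2 * (x ⬝ᵥ A *ᵥ x) := by
    refine ⟨convex_univ, fun x hx y hy hxy a b ha hb hab => ?_⟩
    have := hA.strictConvexOn_dotProduct_mulVec.2 hx hy hxy ha hb hab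
    simp only [smul_eq_mul] at this ⊢
    linarith
  exact hhalf.add_convexOn hΦ

theorem eq_of_forall_regularizedObjective_le (hA : A.PosDef) {Φ : (ι → ℝ) → ℝ}
    (hΦ : ConvexOn ℝ Set.univ Φ) {x y : ι → ℝ}
    (hx : ∀ z, regularizedObjective A Φ x ≤ regularizedObjective A Φ z)
    (hy : ∀ z, regularizedObjective A Φ y ≤ regularizedObjective A Φ z) : x = y :=
  (hA.strictConvexOn_regularizedObjective hΦ).eq_of_isMinOn (isMinOn_univ_iff.2 hx)
    (isMinOn_univ_iff.2 hy) trivial trivial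

theorem exists_forall_regularizedObjective_le (hA : A.PosDef) {Φ : (ι → ℝ) → ℝ}
    (hΦc : Continuous Φ) (hΦb : BddBelow (Set.range Φ)) :
    ∃ x, ∀ y, regularizedObjective A Φ x ≤ regularizedObjective A Φ y := by
  obtain ⟨c, hc, hcoer⟩ := hA.exists_pos_mul_sq_norm_le_dotProduct_mulVec
  obtain ⟨m, hm⟩ := hΦb
  refine Continuous.exists_forall_le ?_
    (tendsto_atTop_mono (f := fun x => c / 2 * ‖x‖ ^ 2 + m) (fun x => ?_) ?_)
  · exact (continuous_const.mul (continuous_dotProduct_mulVec A)).add hΦc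
  · have := hcoer x
    have := hm ⟨x, rfl⟩
    simp only [regularizedObjective]
    linarith
  · exact tendsto_atTop_add_const_right _ _ <| (tendsto_pow_atTop two_ne_zero).comp
      tendsto_norm_cocompact_atTop |>.const_mul_atTop (by positivity)

end Objective

variable {m n : Type*} [Fintype m] [DecidableEq m] [Fintype n] [DecidableEq n]

theorem isLeast_dotProduct_inv_mulVec {C : Matrix n n ℝ} (hC : C.PosDef) (M : Matrix m n ℝ)
    (hS : IsUnit (M * C * Mᵀ)) (b : m → ℝ) :
    IsLeast ((fun u => u ⬝ᵥ C⁻¹ *ᵥ u) '' {u | M *ᵥ u = b}) (b ⬝ᵥ (M * C * Mᵀ)⁻¹ *ᵥ b) := by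
  have hSy : (M * C * Mᵀ) *ᵥ ((M * C * Mᵀ)⁻¹ *ᵥ b) = b := by
    rw [mulVec_mulVec, mul_nonsing_inv _ ((isUnit_iff_isUnit_det _).1 hS), one_mulVec]
  set y := (M * C * Mᵀ)⁻¹ *ᵥ b
  set v := C *ᵥ Mᵀ *ᵥ y
  have hCv : C⁻¹ *ᵥ v = Mᵀ *ᵥ y := by
    rw [mulVec_mulVec, nonsing_inv_mul _ ((isUnit_iff_isUnit_det C).1 hC.isUnit), one_mulVec]
  have hMv : M *ᵥ v = b := by
    rwa [mulVec_mulVec, mulVec_mulVec]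
  have hpair : ∀ u, u ⬝ᵥ C⁻¹ *ᵥ v = (M *ᵥ u) ⬝ᵥ y := fun u => by
    rw [hCv, dotProduct_mulVec, vecMul_transpose]
  have hsymm : ∀ u, v ⬝ᵥ C⁻¹ *ᵥ u = u ⬝ᵥ C⁻¹ *ᵥ v := fun u => by
    rw [dotProduct_mulVec, ← mulVec_transpose, dotProduct_comm,
      ← conjTranspose_eq_transpose_of_trivial, hC.inv.isHermitian.eq]
  refine ⟨⟨v, hMv, by simp only [hpair, hMv]⟩, ?_⟩
  rintro _ ⟨u, hu : M *ᵥ u = b, rfl⟩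
  have hgap := hC.inv.posSemidef.dotProduct_mulVec_nonneg (u - v)
  simp only [star_trivial, mulVec_sub, dotProduct_sub, sub_dotProduct, hsymm, hpair,
    hMv, hu] at hgap ⊢
  linarith

theorem isLeast_dotProduct_inv_mulVec_submatrix {C : Matrix n n ℝ} (hC : C.PosDef)
    {e : m → n} (he : Function.Injective e) (b : m → ℝ) :
    IsLeast ((fun u => u ⬝ᵥ C⁻¹ *ᵥ u) '' {u | u ∘ e = b}) (b ⬝ᵥ (C.submatrix e e)⁻¹ *ᵥ b) := by
  have hS := (hC.submatrix he).isUnit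
  rw [← one_submatrix_mul_mul_transpose] at hS ⊢
  simpa only [one_submatrix_mulVec] using hC.isLeast_dotProduct_inv_mulVec _ hS b

end Matrix.PosDef

/-- Dimension reduction for the regularized functional: minimizing
J(u) = (1/2)⟨u, C⁻¹u⟩ + Φ'(u|_{Z'}) over ℝ^N is equivalent to minimizing
J'(b) = (1/2)⟨b, (C')⁻¹b⟩ + Φ'(b) over ℝ^J, where C' is the principal submatrix of C on
the labelled indices (given by the injective ordering ρ); both have unique minimizers
and b* = u*|_{Z'}. -/
theorem dimension_reduction {N J : ℕ}
    (C : Matrix (Fin N) (Fin N) ℝ) (hC : C.PosDef)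
    (ρ : Fin J → Fin N) (hρ : Function.Injective ρ)
    (Φ' : (Fin J → ℝ) → ℝ)
    (hconv : ConvexOn ℝ Set.univ Φ')
    (hbdd : BddBelow (Set.range Φ'))
    (hdiff : Differentiable ℝ Φ') :
    ∃ (ustar : Fin N → ℝ) (bstar : Fin J → ℝ),
      (∀ v : Fin N → ℝ,
        (1 / 2) * (ustar ⬝ᵥ C⁻¹.mulVec ustar) + Φ' (ustar ∘ ρ)
          ≤ (1 / 2) * (v ⬝ᵥ C⁻¹.mulVec v) + Φ' (v ∘ ρ)) ∧
      (∀ v : Fin N → ℝ,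
        (∀ w : Fin N → ℝ,
          (1 / 2) * (v ⬝ᵥ C⁻¹.mulVec v) + Φ' (v ∘ ρ)
            ≤ (1 / 2) * (w ⬝ᵥ C⁻¹.mulVec w) + Φ' (w ∘ ρ)) → v = ustar) ∧
      (∀ b : Fin J → ℝ,
        (1 / 2) * (bstar ⬝ᵥ (C.submatrix ρ ρ)⁻¹.mulVec bstar) + Φ' bstar
          ≤ (1 / 2) * (b ⬝ᵥ (C.submatrix ρ ρ)⁻¹.mulVec b) + Φ' b) ∧
      (∀ b : Fin J → ℝ,
        (∀ c : Fin J → ℝ,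
          (1 / 2) * (b ⬝ᵥ (C.submatrix ρ ρ)⁻¹.mulVec b) + Φ' b
            ≤ (1 / 2) * (c ⬝ᵥ (C.submatrix ρ ρ)⁻¹.mulVec c) + Φ' c) → b = bstar) ∧
      bstar = ustar ∘ ρ := by
  have hC' : (C.submatrix ρ ρ).PosDef := hC.submatrix hρ
  obtain ⟨bstar, hbstar⟩ :=
    hC'.inv.exists_forall_regularizedObjective_le hdiff.continuous hbdd
  obtain ⟨ustar, hrestrict : ustar ∘ ρ = bstar, henergy⟩ :=
    (hC.isLeast_dotProduct_inv_mulVec_submatrix hρ bstar).1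
  have hustar : ∀ v : Fin N → ℝ, regularizedObjective C⁻¹ (fun u => Φ' (u ∘ ρ)) ustar ≤
      regularizedObjective C⁻¹ (fun u => Φ' (u ∘ ρ)) v := fun v => by
    have hv := (hC.isLeast_dotProduct_inv_mulVec_submatrix hρ (v ∘ ρ)).2 ⟨v, rfl, rfl⟩
    have hb := hbstar (v ∘ ρ)
    simp only [regularizedObjective, henergy, hrestrict] at hb hv ⊢
    linarith
  have hconvN : ConvexOn ℝ Set.univ fun u : Fin N → ℝ => Φ' (u ∘ ρ) :=
    hconv.comp_linearMap (LinearMap.funLeft ℝ ℝ ρ)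
  exact ⟨ustar, bstar, hustar,
    fun v hv => hC.inv.eq_of_forall_regularizedObjective_le hconvN hv hustar, hbstar,
    fun b hb => hC'.inv.eq_of_forall_regularizedObjective_le hconv hb hbstar, hrestrict.symm⟩
end
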